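/- arXiv:1406.2946 — 2 statements merged into one kernel-verified Lean document; each statement's English description precedes it below -/
import Mathlib

section
/- PPT-preserving maps preserve the set PPT': if P is a linear map on operators of H_A ⊗ H_B to operators of H_{A'} ⊗ H_{B'} such that T_{B'} ∘ P ∘ T_B is completely positive and trace preserving, then for every τ ∈ PPT'(A:B), P(τ) ∈ PPT'(A':B'). -/
open scoped Matrix Kronecker
open Matrix
open scoped ComplexOrder

noncomputable section

/-- The partial transpose on the second tensor factor (w.r.t. the standard basis). -/
def partialTranspose {A B : Type*} (M : Matrix (A × B) (A × B) ℂ) :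
    Matrix (A × B) (A × B) ℂ :=
  Matrix.of fun p q => M (p.1, q.2) (q.1, p.2)

/-- The trace norm (sum of singular values) of a complex matrix. -/
def traceNorm {n : Type*} [Fintype n] [DecidableEq n] (M : Matrix n n ℂ) : ℝ :=
  ∑ i, Real.sqrt ((Matrix.isHermitian_conjTranspose_mul_self M).eigenvalues i)

/-- The Rains set PPT'(A:B) of subnormalized-after-partial-transpose positive operators. -/
def PPTprime (A B : Type*) [Fintype A] [Fintype B] [DecidableEq A] [DecidableEq B] :
    Set (Matrix (A × B) (A × B) ℂ) :=
  {τ | τ.PosSemidef ∧ traceNorm (partialTranspose τ) ≤ 1}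

/-- Apply a real function to a Hermitian matrix via its spectral decomposition
(junk value `0` on non-Hermitian input). -/
def matFun {n : Type*} [Fintype n] [DecidableEq n] (f : ℝ → ℝ) (M : Matrix n n ℂ) :
    Matrix n n ℂ :=
  if h : M.IsHermitian then
    (h.eigenvectorUnitary : Matrix n n ℂ) *
      Matrix.diagonal (fun i => (f (h.eigenvalues i) : ℂ)) *
      (h.eigenvectorUnitary : Matrix n n ℂ)ᴴ
  else 0

/-- The quantum relative entropy `D(ρ‖σ) = Tr ρ (log ρ − log σ)` (base 2). -/
def relEntropy {n : Type*} [Fintype n] [DecidableEq n] (ρ σ : Matrix n n ℂ) : ℝ :=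
  ((ρ * (matFun (Real.logb 2) ρ - matFun (Real.logb 2) σ)).trace).re

/-- `Tr{M^α}` for a Hermitian matrix, via eigenvalues (junk `0` otherwise). -/
def traceRpow {n : Type*} [Fintype n] [DecidableEq n] (M : Matrix n n ℂ) (α : ℝ) : ℝ :=
  if h : M.IsHermitian then ∑ i, (h.eigenvalues i) ^ α else 0

/-- The sandwiched Rényi relative entropy of order α (base 2). -/
def sandRenyi {n : Type*} [Fintype n] [DecidableEq n] (α : ℝ) (ρ σ : Matrix n n ℂ) : ℝ :=
  (α - 1)⁻¹ * Real.logb 2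
    (traceRpow (matFun (fun x => x ^ ((1 - α) / (2 * α))) σ * ρ *
        matFun (fun x => x ^ ((1 - α) / (2 * α))) σ) α)

/-- The extension `id_R ⊗ N` of a (linear) map on matrices to a reference system `R`. -/
def chanExt {A B R : Type*} (N : Matrix A A ℂ → Matrix B B ℂ)
    (M : Matrix (R × A) (R × A) ℂ) : Matrix (R × B) (R × B) ℂ :=
  Matrix.of fun p q => N (Matrix.of fun a a' => M (p.1, a) (q.1, a')) p.2 q.2

/-- Linearity of a map on matrices. -/
def IsLinearMatMap {A B : Type*} (N : Matrix A A ℂ → Matrix B B ℂ) : Prop :=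
  ∀ (c : ℂ) (M M' : Matrix A A ℂ), N (c • M + M') = c • N M + N M'

/-- Complete positivity: every extension by a reference system preserves positivity. -/
def IsCompletelyPositive {A B : Type*} [Fintype A] [Fintype B] (N : Matrix A A ℂ → Matrix B B ℂ) : Prop :=
  ∀ (R : Type) [Fintype R] [DecidableEq R],
    ∀ M : Matrix (R × A) (R × A) ℂ, M.PosSemidef → (chanExt N M).PosSemidef

/-- Trace preservation. -/
def IsTracePreserving {A B : Type*} [Fintype A] [Fintype B]
    (N : Matrix A A ℂ → Matrix B B ℂ) : Prop :=
  ∀ M, (N M).trace = M.trace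

/-- A quantum channel: a linear, completely positive, trace-preserving map. -/
def IsChannel {A B : Type*} [Fintype A] [Fintype B]
    (N : Matrix A A ℂ → Matrix B B ℂ) : Prop :=
  IsLinearMatMap N ∧ IsCompletelyPositive N ∧ IsTracePreserving N

/-- A density operator. -/
def IsDensity {n : Type*} [Fintype n] (ρ : Matrix n n ℂ) : Prop :=
  ρ.PosSemidef ∧ ρ.trace = 1

/-- The Rains relative entropy of a bipartite state. -/
def RainsRel {A B : Type*} [Fintype A] [Fintype B] [DecidableEq A] [DecidableEq B]
    (ρ : Matrix (A × B) (A × B) ℂ) : ℝ :=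
  ⨅ τ : (PPTprime A B), relEntropy ρ τ.1

/-- The Rains information of a channel (reference system of input dimension). -/
def RainsChan {A B : Type*} [Fintype A] [Fintype B] [DecidableEq A] [DecidableEq B]
    (N : Matrix A A ℂ → Matrix B B ℂ) : ℝ :=
  ⨆ ρ : {ρ : Matrix (A × A) (A × A) ℂ // IsDensity ρ},
    ⨅ τ : (PPTprime A B), relEntropy (chanExt N ρ.1) τ.1

/-- The sandwiched Rényi Rains information of a channel. -/
def RainsRenyiChan {A B : Type*} [Fintype A] [Fintype B] [DecidableEq A] [DecidableEq B]
    (α : ℝ) (N : Matrix A A ℂ → Matrix B B ℂ) : ℝ :=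
  ⨆ ρ : {ρ : Matrix (A × A) (A × A) ℂ // IsDensity ρ},
    ⨅ τ : (PPTprime A B), sandRenyi α (chanExt N ρ.1) τ.1

/-- The `n`-fold tensor power of a linear map on matrices. -/
def tpow {A B : Type*} [Fintype A] [DecidableEq A] (N : Matrix A A ℂ → Matrix B B ℂ)
    (n : ℕ) (M : Matrix (Fin n → A) (Fin n → A) ℂ) : Matrix (Fin n → B) (Fin n → B) ℂ :=
  Matrix.of fun f g => ∑ f' : Fin n → A, ∑ g' : Fin n → A,
    M f' g' * ∏ i, N (Matrix.single (f' i) (g' i) 1) (f i) (g i)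

end

/-!
Write the partial transpose of `τ` as `X = X⁺ - X⁻` with `X⁺, X⁻ ⪰ 0`, so that
`‖X‖₁ = Tr X⁺ + Tr X⁻`. The map `Φ = T_{B'} ∘ P ∘ T_B` is linear, positive and trace preserving,
and `‖Y - Z‖₁ ≤ Tr Y + Tr Z` for `Y, Z ⪰ 0`; hence
`‖T_{B'}(P τ)‖₁ = ‖Φ X⁺ - Φ X⁻‖₁ ≤ Tr X⁺ + Tr X⁻ = ‖X‖₁ ≤ 1`.
-/

open scoped MatrixOrder

namespace Matrix

variable {n : Type*} [Fintype n] [DecidableEq n]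

theorem IsHermitian.trace_cfc {A : Matrix n n ℂ} (hA : A.IsHermitian) (f : ℝ → ℝ) :
    (cfc f A).trace = ∑ i, (f (hA.eigenvalues i) : ℂ) := by
  rw [hA.cfc_eq, IsHermitian.cfc, Unitary.conjStarAlgAut_apply, trace_mul_cycle,
    Unitary.coe_star_mul_self, one_mul, trace_diagonal]
  rfl

theorem PosSemidef.trace_mul_nonneg {A B : Matrix n n ℂ} (hA : A.PosSemidef)
    (hB : B.PosSemidef) : 0 ≤ (A * B).trace := by
  obtain ⟨C, rfl⟩ := CStarAlgebra.nonneg_iff_eq_star_mul_self.mp hB.nonneg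
  rw [← mul_assoc, trace_mul_cycle, mul_assoc]
  simpa only [mul_assoc, star_eq_conjTranspose] using
    (hA.mul_mul_conjTranspose_same C).trace_nonneg

end Matrix

open Matrix

section TraceNorm

variable {n : Type*} [Fintype n] [DecidableEq n]

theorem ofReal_traceNorm (M : Matrix n n ℂ) : (traceNorm M : ℂ) = (CFC.abs M).trace := by
  rw [CFC.abs, CFC.sqrt_eq_real_sqrt _ (star_mul_self_nonneg M), cfcₙ_eq_cfc,
    star_eq_conjTranspose, (isHermitian_conjTranspose_mul_self M).trace_cfc, traceNorm]
  push_cast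
  rfl

theorem ofReal_traceNorm_sub_le {Y Z : Matrix n n ℂ} (hY : Y.PosSemidef) (hZ : Z.PosSemidef) :
    (traceNorm (Y - Z) : ℂ) ≤ Y.trace + Z.trace := by
  have hW : IsSelfAdjoint (Y - Z) := hY.1.sub hZ.1
  -- `S = sign (Y - Z)` satisfies `|Y - Z| = S (Y - Z)` and `-1 ≤ S ≤ 1`.
  let σ : ℝ → ℝ := fun x => if 0 ≤ x then 1 else -1
  have hσ : ContinuousOn σ (spectrum ℝ (Y - Z)) := (Y - Z).finite_real_spectrum.continuousOn σ
  set S := cfc σ (Y - Z)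
  have hS : CFC.abs (Y - Z) = S * (Y - Z) := by
    rw [CFC.abs_eq_cfc_norm _ hW]
    conv_rhs => rw [← cfc_id' ℝ (Y - Z) hW, ← cfc_mul σ (fun x => x) _ hσ]
    refine cfc_congr fun x _ => ?_
    by_cases hx : 0 ≤ x <;> simp [σ, hx, abs_of_nonneg, le_of_not_ge]
  have hSY : 0 ≤ Y.trace - (S * Y).trace := by
    have : (1 - S).PosSemidef := by
      rw [← nonneg_iff_posSemidef, ← cfc_const_one ℝ (Y - Z),
        ← cfc_sub (fun _ => 1) σ (Y - Z) (hg := hσ)]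
      exact cfc_nonneg fun x _ => by by_cases hx : 0 ≤ x <;> simp [σ, hx]
    simpa [sub_mul] using this.trace_mul_nonneg hY
  have hSZ : 0 ≤ Z.trace + (S * Z).trace := by
    have : (1 + S).PosSemidef := by
      rw [← nonneg_iff_posSemidef, ← cfc_const_one ℝ (Y - Z),
        ← cfc_add (a := Y - Z) (fun _ => 1) σ (hg := hσ)]
      exact cfc_nonneg fun x _ => by by_cases hx : 0 ≤ x <;> simp [σ, hx]
    simpa [add_mul] using this.trace_mul_nonneg hZ
  rw [ofReal_traceNorm, hS, mul_sub, trace_sub, ← sub_nonneg]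
  convert add_nonneg hSY hSZ using 1
  ring

end TraceNorm

theorem IsLinearMatMap.map_sub {A B : Type*} {N : Matrix A A ℂ → Matrix B B ℂ}
    (hN : IsLinearMatMap N) (M M' : Matrix A A ℂ) : N (M - M') = N M - N M' := by
  simpa [sub_eq_neg_add] using hN (-1) M' M

theorem IsCompletelyPositive.posSemidef {A B : Type*} [Fintype A] [Fintype B]
    {N : Matrix A A ℂ → Matrix B B ℂ} (hN : IsCompletelyPositive N) {M : Matrix A A ℂ}
    (hM : M.PosSemidef) : (N M).PosSemidef :=
  (hN (Fin 1) (M.submatrix Prod.snd Prod.snd) (hM.submatrix _)).submatrix (fun b => (0, b))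

theorem traceNorm_map_le {A B : Type*} [Fintype A] [DecidableEq A] [Fintype B] [DecidableEq B]
    {Φ : Matrix A A ℂ → Matrix B B ℂ} (hlin : IsLinearMatMap Φ)
    (hpos : ∀ M, M.PosSemidef → (Φ M).PosSemidef) (htp : IsTracePreserving Φ)
    {X : Matrix A A ℂ} (hX : X.IsHermitian) : traceNorm (Φ X) ≤ traceNorm X := by
  have hΦ : Φ X = Φ X⁺ - Φ X⁻ := by rw [← hlin.map_sub, CFC.posPart_sub_negPart X hX]
  suffices (traceNorm (Φ X) : ℂ) ≤ traceNorm X by exact_mod_cast this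
  calc (traceNorm (Φ X) : ℂ) = traceNorm (Φ X⁺ - Φ X⁻) := by rw [hΦ]
    _ ≤ (Φ X⁺).trace + (Φ X⁻).trace :=
      ofReal_traceNorm_sub_le (hpos _ (CFC.posPart_nonneg X).posSemidef)
        (hpos _ (CFC.negPart_nonneg X).posSemidef)
    _ = (X⁺ + X⁻).trace := by rw [htp, htp, trace_add]
    _ = traceNorm X := by rw [CFC.posPart_add_negPart X hX, ofReal_traceNorm]

theorem partialTranspose_partialTranspose {A B : Type*} (M : Matrix (A × B) (A × B) ℂ) :
    partialTranspose (partialTranspose M) = M :=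
  rfl

theorem isHermitian_partialTranspose {A B : Type*} {M : Matrix (A × B) (A × B) ℂ}
    (hM : M.IsHermitian) : (partialTranspose M).IsHermitian :=
  IsHermitian.ext fun p q => hM.apply (p.1, q.2) (q.1, p.2)

/-- PPT-preserving maps preserve the set PPT'. -/
theorem pptPreserving_maps_pptPrime {A B A' B' : Type*}
    [Fintype A] [Fintype B] [Fintype A'] [Fintype B']
    [DecidableEq A] [DecidableEq B] [DecidableEq A'] [DecidableEq B']
    (P : Matrix (A × B) (A × B) ℂ → Matrix (A' × B') (A' × B') ℂ)
    (hPos : ∀ M, M.PosSemidef → (P M).PosSemidef)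
    (hPPT : IsChannel (fun M => partialTranspose (P (partialTranspose M))))
    (τ : Matrix (A × B) (A × B) ℂ) (hτ : τ ∈ PPTprime A B) :
    P τ ∈ PPTprime A' B' := by
  obtain ⟨hτpos, hτnorm⟩ := hτ
  obtain ⟨hlin, hCP, htp⟩ := hPPT
  refine ⟨hPos τ hτpos, le_trans ?_ hτnorm⟩
  simpa only [partialTranspose_partialTranspose] using
    traceNorm_map_le hlin (fun _ => hCP.posSemidef) htp (isHermitian_partialTranspose hτpos.1)
end

section
/- Rains information upper bound for the qudit erasure channel: for the erasure channel N_p(ρ) = (1−p)ρ + p|e⟩⟨e| with erasure probability p ∈ [0,1] on input dimension d = |A|, the Rains information satisfies R(N_p) ≤ (1−p) log d. Specifically, with Φ the maximally entangled input and τ_{RB} = Σ_x (1/d)|x⟩⟨x|_R ⊗ N_p(|x⟩⟨x|_A) (which is in PPT'), D(N_p(Φ_{RA})‖τ_{RB}) = (1−p) log d, using H(τ_{RB}) = log d + h₂(p) and H(N_p(Φ_{RA})) = h₂(p) + p log d. -/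
/-!
On `R ⊗ (A ⊕ e)` the erasure channel acts as `N_p(ρ) = (1-p) ρ ⊕ p Tr_A ρ ⊗ |e⟩⟨e|`.

For an arbitrary input state `ρ`, the operator `τ = (1-p)/‖ρ^Γ‖₁ · ρ ⊕ p Tr_A ρ ⊗ |e⟩⟨e|`
is positive, its partial transpose has trace norm `(1-p) + p = 1`, so it lies in `PPT'`, and
it is diagonal in the same basis as `N_p(ρ)`.  Hence `D(N_p(ρ)‖τ) = (1-p) log ‖ρ^Γ‖₁`, and
`‖ρ^Γ‖₁ ≤ d ‖ρ^Γ‖₂ = d ‖ρ‖₂ ≤ d` by Cauchy–Schwarz on the `d²` eigenvalues.  This bounds the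
Rains information by `(1-p) log d`.

For the maximally entangled input and the classically correlated `τ_{RB}`, the output and
`τ_{RB}` have the same diagonal while `τ_{RB}` is diagonal, so the relative entropy is
`H(τ_{RB}) - H(N_p(Φ)) = (log d + h₂(p)) - (h₂(p) + p log d)`; the eigenvalues of `N_p(Φ)`
are `1-p` (from the projector `Φ`) and `p/d` with multiplicity `d`.

All spectral computations rest on one fact: if `M = U diag(w) U†`, then
`f(M) = U diag(f ∘ w) U†` for every such diagonalisation, because a matrix intertwining two real
diagonal matrices only connects equal diagonal entries.  Traces, trace norms and relative
entropies of matrices diagonal in a common basis are therefore sums over their eigenvalues.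
-/

open scoped Matrix Kronecker
open Matrix
open scoped ComplexOrder

noncomputable section

/-- The qudit erasure channel with erasure probability `p`, with erasure flag
given by the extra `Unit` dimension. -/
noncomputable def erasureChannel {A : Type*} [Fintype A] (p : ℝ)
    (ρ : Matrix A A ℂ) : Matrix (A ⊕ Unit) (A ⊕ Unit) ℂ :=
  ((1 - p : ℝ) : ℂ) • Matrix.fromBlocks ρ 0 0 0 +
    ((p : ℂ) * ρ.trace) • Matrix.fromBlocks 0 0 0 (1 : Matrix Unit Unit ℂ)

/-- The maximally entangled input state `Φ_{RA}` with `R ≃ A`. -/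
noncomputable def maxEntIn (A : Type*) [Fintype A] [DecidableEq A] :
    Matrix (A × A) (A × A) ℂ :=
  Matrix.of fun x y =>
    if x.1 = x.2 ∧ y.1 = y.2 then ((Fintype.card A : ℂ))⁻¹ else 0

/-- The classically correlated operator `τ_{RB} = Σ_x (1/d)|x⟩⟨x|_R ⊗ N_p(|x⟩⟨x|)`. -/
noncomputable def erasureTau (A : Type*) [Fintype A] [DecidableEq A] (p : ℝ) :
    Matrix (A × (A ⊕ Unit)) (A × (A ⊕ Unit)) ℂ :=
  Matrix.of fun pr q =>
    if pr.1 = q.1 then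
      ((Fintype.card A : ℂ))⁻¹ *
        (erasureChannel p (Matrix.single pr.1 pr.1 (1 : ℂ))) pr.2 q.2
    else 0

namespace Matrix

open Unitary

section Spectral

variable {n : Type*} [Fintype n] [DecidableEq n]

def spectralMatrix (U : unitaryGroup n ℂ) (w : n → ℝ) : Matrix n n ℂ :=
  conjStarAlgAut ℂ _ U (diagonal fun i => (w i : ℂ))

lemma IsHermitian.eq_spectralMatrix {M : Matrix n n ℂ} (hM : M.IsHermitian) :
    M = spectralMatrix hM.eigenvectorUnitary hM.eigenvalues :=
  hM.spectral_theorem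

lemma spectralMatrix_apply (U : unitaryGroup n ℂ) (w : n → ℝ) :
    spectralMatrix U w = (U : Matrix n n ℂ) * diagonal (fun i => (w i : ℂ)) * (U : Matrix n n ℂ)ᴴ :=
  rfl

lemma spectralMatrix_one (w : n → ℝ) : spectralMatrix 1 w = diagonal fun i => (w i : ℂ) := by
  simp [spectralMatrix]

lemma spectralMatrix_mul (U : unitaryGroup n ℂ) (a b : n → ℝ) :
    spectralMatrix U a * spectralMatrix U b = spectralMatrix U (a * b) := by
  rw [spectralMatrix, spectralMatrix, ← map_mul, diagonal_mul_diagonal, spectralMatrix]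
  simp only [Pi.mul_apply, Complex.ofReal_mul]

lemma spectralMatrix_sub (U : unitaryGroup n ℂ) (a b : n → ℝ) :
    spectralMatrix U a - spectralMatrix U b = spectralMatrix U (a - b) := by
  rw [spectralMatrix, spectralMatrix, ← map_sub, diagonal_sub]
  simp [spectralMatrix]

lemma spectralMatrix_smul (U : unitaryGroup n ℂ) (r : ℝ) (w : n → ℝ) :
    spectralMatrix U (r • w) = (r : ℂ) • spectralMatrix U w := by
  rw [spectralMatrix, spectralMatrix, ← map_smul, ← diagonal_smul]
  simp only [Pi.smul_apply, smul_eq_mul, Complex.ofReal_mul]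
  rfl

lemma isHermitian_spectralMatrix (U : unitaryGroup n ℂ) (w : n → ℝ) :
    (spectralMatrix U w).IsHermitian := by
  rw [IsHermitian, ← star_eq_conjTranspose, spectralMatrix, ← map_star, star_eq_conjTranspose,
    diagonal_conjTranspose]
  simp [Pi.star_def]

lemma posSemidef_spectralMatrix (U : unitaryGroup n ℂ) {w : n → ℝ} (hw : 0 ≤ w) :
    (spectralMatrix U w).PosSemidef :=
  (posSemidef_diagonal_iff.mpr fun i => Complex.zero_le_real.mpr (hw i)).mul_mul_conjTranspose_same
    _

lemma trace_spectralMatrix (U : unitaryGroup n ℂ) (w : n → ℝ) :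
    (spectralMatrix U w).trace = ∑ i, (w i : ℂ) := by
  rw [spectralMatrix_apply, trace_mul_cycle, ← star_eq_conjTranspose, coe_star_mul_self,
    Matrix.one_mul, trace_diagonal]

lemma re_trace_spectralMatrix (U : unitaryGroup n ℂ) (w : n → ℝ) :
    (spectralMatrix U w).trace.re = ∑ i, w i := by
  simp [trace_spectralMatrix]

lemma spectralMatrix_injective (U : unitaryGroup n ℂ) : Function.Injective (spectralMatrix U) := by
  intro a b h
  ext i
  simpa using congrFun (diagonal_injective ((conjStarAlgAut ℂ _ U).injective h)) i

lemma mul_diagonal_comp_eq_of_mul_diagonal_eq {X : Matrix n n ℂ} {a b : n → ℝ}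
    (h : X * diagonal (fun i => (a i : ℂ)) = diagonal (fun i => (b i : ℂ)) * X) (f : ℝ → ℝ) :
    X * diagonal (fun i => (f (a i) : ℂ)) = diagonal (fun i => (f (b i) : ℂ)) * X := by
  ext i j
  have hij := congrFun (congrFun h i) j
  simp only [mul_diagonal, diagonal_mul] at hij ⊢
  by_cases hX : X i j = 0
  · simp [hX]
  · have : a j = b i := by
      exact_mod_cast mul_left_cancel₀ hX (hij.trans (mul_comm _ _))
    rw [this, mul_comm]

lemma conjStarAlgAut_apply_eq_iff (U : unitaryGroup n ℂ) (M N : Matrix n n ℂ) :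
    conjStarAlgAut ℂ _ U M = N ↔ (U : Matrix n n ℂ) * M = N * U := by
  constructor
  · rintro rfl
    simp [Matrix.mul_assoc]
  · intro h
    simp [h, Matrix.mul_assoc]

lemma spectralMatrix_comp_eq {U V : unitaryGroup n ℂ} {a b : n → ℝ}
    (h : spectralMatrix U a = spectralMatrix V b) (f : ℝ → ℝ) :
    spectralMatrix U (f ∘ a) = spectralMatrix V (f ∘ b) := by
  set X : unitaryGroup n ℂ := star V * U
  have hU (w : n → ℝ) : spectralMatrix U w =
      conjStarAlgAut ℂ _ V (conjStarAlgAut ℂ _ X (diagonal fun i => (w i : ℂ))) := by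
    rw [spectralMatrix, ← conjStarAlgAut_mul_apply, ← mul_assoc, Unitary.mul_star_self, one_mul]
  rw [hU, spectralMatrix]
  congr 1
  rw [conjStarAlgAut_apply_eq_iff]
  apply mul_diagonal_comp_eq_of_mul_diagonal_eq
  rw [← conjStarAlgAut_apply_eq_iff]
  exact (conjStarAlgAut ℂ _ V).injective ((hU a).symm.trans h)

lemma matFun_spectralMatrix (f : ℝ → ℝ) (U : unitaryGroup n ℂ) (w : n → ℝ) :
    matFun f (spectralMatrix U w) = spectralMatrix U (f ∘ w) := by
  have hM := isHermitian_spectralMatrix U w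
  rw [matFun, dif_pos hM]
  exact spectralMatrix_comp_eq hM.eq_spectralMatrix.symm f

lemma matFun_diagonal (f : ℝ → ℝ) (w : n → ℝ) :
    matFun f (diagonal fun i => (w i : ℂ)) = diagonal fun i => (f (w i) : ℂ) := by
  rw [← spectralMatrix_one, matFun_spectralMatrix, spectralMatrix_one]
  rfl

lemma IsHermitian.sum_comp_eigenvalues {M : Matrix n n ℂ} (hM : M.IsHermitian)
    {U : unitaryGroup n ℂ} {w : n → ℝ} (h : M = spectralMatrix U w) (g : ℝ → ℝ) :
    ∑ i, g (hM.eigenvalues i) = ∑ i, g (w i) := by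
  have := congrArg (fun X => X.trace.re)
    (spectralMatrix_comp_eq (hM.eq_spectralMatrix.symm.trans h) g)
  simpa [re_trace_spectralMatrix] using this

lemma traceNorm_spectralMatrix (U : unitaryGroup n ℂ) (w : n → ℝ) :
    traceNorm (spectralMatrix U w) = ∑ i, |w i| := by
  have h : (spectralMatrix U w)ᴴ * spectralMatrix U w = spectralMatrix U (w * w) := by
    rw [(isHermitian_spectralMatrix U w).eq, spectralMatrix_mul]
  rw [traceNorm, (isHermitian_conjTranspose_mul_self _).sum_comp_eigenvalues h]
  simp [Real.sqrt_mul_self_eq_abs]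

lemma relEntropy_spectralMatrix (U : unitaryGroup n ℂ) (a b : n → ℝ) :
    relEntropy (spectralMatrix U a) (spectralMatrix U b) =
      ∑ i, a i * (Real.logb 2 (a i) - Real.logb 2 (b i)) := by
  rw [relEntropy, matFun_spectralMatrix, matFun_spectralMatrix, spectralMatrix_sub,
    spectralMatrix_mul, re_trace_spectralMatrix]
  rfl

lemma relEntropy_spectralMatrix_diagonal (U : unitaryGroup n ℂ) (a t : n → ℝ) :
    relEntropy (spectralMatrix U a) (diagonal fun i => (t i : ℂ)) =
      ∑ i, a i * Real.logb 2 (a i) - ∑ i, (spectralMatrix U a i i).re * Real.logb 2 (t i) := by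
  rw [relEntropy, Matrix.mul_sub, trace_sub, Complex.sub_re, matFun_spectralMatrix,
    spectralMatrix_mul, re_trace_spectralMatrix, matFun_diagonal]
  simp [trace, mul_diagonal, Complex.re_sum]

lemma IsHermitian.traceNorm_eq {M : Matrix n n ℂ} (hM : M.IsHermitian) :
    traceNorm M = ∑ i, |hM.eigenvalues i| := by
  conv_lhs => rw [hM.eq_spectralMatrix]
  exact traceNorm_spectralMatrix _ _

lemma IsHermitian.re_trace_eq_sum_eigenvalues {M : Matrix n n ℂ} (hM : M.IsHermitian) :
    M.trace.re = ∑ i, hM.eigenvalues i := by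
  simp [hM.trace_eq_sum_eigenvalues]

lemma IsHermitian.re_trace_le_traceNorm {M : Matrix n n ℂ} (hM : M.IsHermitian) :
    M.trace.re ≤ traceNorm M := by
  rw [hM.re_trace_eq_sum_eigenvalues, hM.traceNorm_eq]
  exact Finset.sum_le_sum fun i _ => le_abs_self _

lemma IsHermitian.traceNorm_sq_le {M : Matrix n n ℂ} (hM : M.IsHermitian) :
    traceNorm M ^ 2 ≤ Fintype.card n * (M * M).trace.re := by
  have hMM : M * M = spectralMatrix hM.eigenvectorUnitary (hM.eigenvalues * hM.eigenvalues) := by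
    conv_lhs => rw [hM.eq_spectralMatrix]
    exact spectralMatrix_mul _ _ _
  rw [hMM, re_trace_spectralMatrix, hM.traceNorm_eq]
  calc (∑ i, |hM.eigenvalues i|) ^ 2 = (∑ i, 1 * |hM.eigenvalues i|) ^ 2 := by simp
    _ ≤ (∑ _i : n, (1 : ℝ) ^ 2) * ∑ i, |hM.eigenvalues i| ^ 2 :=
      Finset.sum_mul_sq_le_sq_mul_sq _ _ _
    _ = _ := by simp [sq]

lemma IsHermitian.traceNorm_smul {M : Matrix n n ℂ} (hM : M.IsHermitian) (r : ℝ) :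
    traceNorm ((r : ℂ) • M) = |r| * traceNorm M := by
  rw [hM.eq_spectralMatrix, ← spectralMatrix_smul, traceNorm_spectralMatrix,
    traceNorm_spectralMatrix, Finset.mul_sum]
  simp [abs_mul]

lemma PosSemidef.traceNorm_eq_re_trace {M : Matrix n n ℂ} (hM : M.PosSemidef) :
    traceNorm M = M.trace.re := by
  rw [hM.1.traceNorm_eq, hM.1.re_trace_eq_sum_eigenvalues]
  exact Finset.sum_congr rfl fun i _ => abs_of_nonneg (hM.eigenvalues_nonneg i)

lemma IsHermitian.eigenvalues_eq_zero_or_one {M : Matrix n n ℂ} (hM : M.IsHermitian)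
    (hMM : M * M = M) (i : n) :
    hM.eigenvalues i = 0 ∨ hM.eigenvalues i = 1 := by
  have h : hM.eigenvalues * hM.eigenvalues = hM.eigenvalues := by
    apply spectralMatrix_injective hM.eigenvectorUnitary
    rw [← spectralMatrix_mul, ← hM.eq_spectralMatrix, hMM]
  have hi : hM.eigenvalues i * (hM.eigenvalues i - 1) = 0 := by
    have := congrFun h i
    simp only [Pi.mul_apply] at this
    linear_combination this
  rcases mul_eq_zero.mp hi with h0 | h1
  exacts [Or.inl h0, Or.inr (sub_eq_zero.mp h1)]

end Spectral

section Blocks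

variable {I α β : Type*} [Fintype I] [DecidableEq I] [Fintype α] [DecidableEq α]
  [Fintype β] [DecidableEq β]

def blockUnitary (e : I ≃ α ⊕ β) (U : unitaryGroup α ℂ) (V : unitaryGroup β ℂ) :
    unitaryGroup I ℂ :=
  ⟨(fromBlocks (U : Matrix α α ℂ) 0 0 V).submatrix e e, by
    rw [mem_unitaryGroup_iff, star_eq_conjTranspose, conjTranspose_submatrix,
      fromBlocks_conjTranspose, submatrix_mul_equiv, fromBlocks_multiply]
    simp [← star_eq_conjTranspose, fromBlocks_one]⟩

lemma fromBlocks_spectralMatrix_submatrix (e : I ≃ α ⊕ β) (U : unitaryGroup α ℂ)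
    (V : unitaryGroup β ℂ) (a : α → ℝ) (b : β → ℝ) :
    (fromBlocks (spectralMatrix U a) 0 0 (spectralMatrix V b)).submatrix e e =
      spectralMatrix (blockUnitary e U V) (Sum.elim a b ∘ e) := by
  have hdiag : (diagonal fun i => ((Sum.elim a b ∘ e) i : ℂ)) =
      (fromBlocks (diagonal fun i => (a i : ℂ)) 0 0 (diagonal fun j => (b j : ℂ))).submatrix
        e e := by
    rw [fromBlocks_diagonal, submatrix_diagonal_equiv]
    congr 1
    ext i
    simp only [Function.comp_apply]
    cases e i <;> rfl
  rw [spectralMatrix_apply (blockUnitary e U V), hdiag, blockUnitary, conjTranspose_submatrix,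
    fromBlocks_conjTranspose, submatrix_mul_equiv, submatrix_mul_equiv, fromBlocks_multiply,
    fromBlocks_multiply]
  simp [spectralMatrix_apply]

lemma traceNorm_fromBlocks_submatrix (e : I ≃ α ⊕ β) {X : Matrix α α ℂ} {Y : Matrix β β ℂ}
    (hX : X.IsHermitian) (hY : Y.IsHermitian) :
    traceNorm ((fromBlocks X 0 0 Y).submatrix e e) = traceNorm X + traceNorm Y := by
  rw [hX.eq_spectralMatrix, hY.eq_spectralMatrix, fromBlocks_spectralMatrix_submatrix,
    traceNorm_spectralMatrix, traceNorm_spectralMatrix, traceNorm_spectralMatrix]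
  exact (e.sum_comp fun x => |Sum.elim hX.eigenvalues hY.eigenvalues x|).trans
    (Fintype.sum_sum_type _)

lemma relEntropy_fromBlocks_submatrix (e : I ≃ α ⊕ β) (U : unitaryGroup α ℂ)
    (V : unitaryGroup β ℂ) (a a' : α → ℝ) (b b' : β → ℝ) :
    relEntropy ((fromBlocks (spectralMatrix U a) 0 0 (spectralMatrix V b)).submatrix e e)
        ((fromBlocks (spectralMatrix U a') 0 0 (spectralMatrix V b')).submatrix e e) =
      relEntropy (spectralMatrix U a) (spectralMatrix U a') +
        relEntropy (spectralMatrix V b) (spectralMatrix V b') := by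
  simp only [fromBlocks_spectralMatrix_submatrix, relEntropy_spectralMatrix]
  exact (e.sum_comp fun x => Sum.elim a b x *
    (Real.logb 2 (Sum.elim a b x) - Real.logb 2 (Sum.elim a' b' x))).trans (Fintype.sum_sum_type _)

lemma posSemidef_fromBlocks_submatrix (e : I ≃ α ⊕ β) {X : Matrix α α ℂ} {Y : Matrix β β ℂ}
    (hX : X.PosSemidef) (hY : Y.PosSemidef) : ((fromBlocks X 0 0 Y).submatrix e e).PosSemidef := by
  rw [hX.1.eq_spectralMatrix, hY.1.eq_spectralMatrix, fromBlocks_spectralMatrix_submatrix]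
  refine posSemidef_spectralMatrix _ fun i => ?_
  simp only [Function.comp_apply]
  cases e i
  exacts [hX.eigenvalues_nonneg _, hY.eigenvalues_nonneg _]

end Blocks

end Matrix

lemma IsDensity.sum_eigenvalues {n : Type*} [Fintype n] [DecidableEq n] {ρ : Matrix n n ℂ}
    (hρ : IsDensity ρ) : ∑ i, hρ.1.1.eigenvalues i = 1 := by
  rw [← hρ.1.1.re_trace_eq_sum_eigenvalues, hρ.2, Complex.one_re]

lemma IsDensity.re_trace_mul_self_le_one {n : Type*} [Fintype n] [DecidableEq n]
    {ρ : Matrix n n ℂ} (hρ : IsDensity ρ) : (ρ * ρ).trace.re ≤ 1 := by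
  have hnonneg := hρ.1.eigenvalues_nonneg
  have hρρ : ρ * ρ = Matrix.spectralMatrix hρ.1.1.eigenvectorUnitary
      (hρ.1.1.eigenvalues * hρ.1.1.eigenvalues) := by
    conv_lhs => rw [hρ.1.1.eq_spectralMatrix]
    exact Matrix.spectralMatrix_mul _ _ _
  rw [hρρ, Matrix.re_trace_spectralMatrix]
  calc ∑ i, (hρ.1.1.eigenvalues * hρ.1.1.eigenvalues) i = ∑ i, hρ.1.1.eigenvalues i ^ 2 := by
        simp [sq]
    _ ≤ (∑ i, hρ.1.1.eigenvalues i) ^ 2 := Finset.sum_sq_le_sq_sum_of_nonneg fun i _ => hnonneg i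
    _ = 1 := by rw [hρ.sum_eigenvalues, one_pow]

section Bipartite

variable {R A : Type*}

/-- The partial trace over `A`, placed on `R × Unit` to fill the erased block. -/
def partialTraceSnd [Fintype A] (ρ : Matrix (R × A) (R × A) ℂ) : Matrix (R × Unit) (R × Unit) ℂ :=
  of fun x y => ∑ a, ρ (x.1, a) (y.1, a)

def erasureBlocks (X : Matrix (R × A) (R × A) ℂ) (Y : Matrix (R × Unit) (R × Unit) ℂ) :
    Matrix (R × (A ⊕ Unit)) (R × (A ⊕ Unit)) ℂ :=
  (fromBlocks X 0 0 Y).submatrix (Equiv.prodSumDistrib R A Unit) (Equiv.prodSumDistrib R A Unit)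

lemma posSemidef_partialTraceSnd [Fintype R] [Fintype A] [DecidableEq R] [DecidableEq A]
    {ρ : Matrix (R × A) (R × A) ℂ} (hρ : ρ.PosSemidef) : (partialTraceSnd ρ).PosSemidef := by
  let K : A → Matrix (R × Unit) (R × A) ℂ := fun a => of fun x s => if s = (x.1, a) then 1 else 0
  have hK : partialTraceSnd ρ = ∑ a, K a * ρ * (K a)ᴴ := by
    ext x y
    simp [partialTraceSnd, K, Matrix.sum_apply, mul_apply, ite_mul, mul_ite, Finset.sum_ite_eq']
  rw [hK]
  exact posSemidef_sum _ fun a _ => hρ.mul_mul_conjTranspose_same (K a)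

lemma trace_partialTraceSnd [Fintype R] [Fintype A] (ρ : Matrix (R × A) (R × A) ℂ) :
    (partialTraceSnd ρ).trace = ρ.trace := by
  simp [trace, partialTraceSnd, Fintype.sum_prod_type]

lemma isHermitian_partialTranspose_s18 {ρ : Matrix (R × A) (R × A) ℂ} (hρ : ρ.IsHermitian) :
    (partialTranspose ρ).IsHermitian := by
  ext x y
  exact congrFun (congrFun hρ.eq (x.1, y.2)) (y.1, x.2)

lemma partialTranspose_smul (c : ℂ) (ρ : Matrix (R × A) (R × A) ℂ) :
    partialTranspose (c • ρ) = c • partialTranspose ρ :=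
  rfl

lemma trace_partialTranspose [Fintype R] [Fintype A] (ρ : Matrix (R × A) (R × A) ℂ) :
    (partialTranspose ρ).trace = ρ.trace :=
  rfl

lemma trace_partialTranspose_mul_self [Fintype R] [Fintype A] (ρ : Matrix (R × A) (R × A) ℂ) :
    (partialTranspose ρ * partialTranspose ρ).trace = (ρ * ρ).trace := by
  let swap (q : (R × A) × (R × A)) : (R × A) × (R × A) := ((q.1.1, q.2.2), (q.2.1, q.1.2))
  simp only [trace, diag_apply, mul_apply, partialTranspose, of_apply, ← Fintype.sum_prod_type']
  exact Fintype.sum_equiv ⟨swap, swap, fun _ => rfl, fun _ => rfl⟩ _ _ fun _ => rfl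

lemma partialTranspose_erasureBlocks (X : Matrix (R × A) (R × A) ℂ)
    (Y : Matrix (R × Unit) (R × Unit) ℂ) :
    partialTranspose (erasureBlocks X Y) = erasureBlocks (partialTranspose X) Y := by
  ext ⟨x, a | u⟩ ⟨y, b | v⟩ <;> rfl

lemma chanExt_erasureChannel [Fintype A] (p : ℝ) (ρ : Matrix (R × A) (R × A) ℂ) :
    chanExt (erasureChannel p) ρ =
      erasureBlocks (((1 - p : ℝ) : ℂ) • ρ) ((p : ℂ) • partialTraceSnd ρ) := by
  ext ⟨x, a | u⟩ ⟨y, b | v⟩ <;>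
    simp [chanExt, erasureChannel, erasureBlocks, partialTraceSnd, trace]

lemma partialTranspose_diagonal [DecidableEq R] [DecidableEq A] (w : R × A → ℂ) :
    partialTranspose (diagonal w) = diagonal w := by
  ext ⟨x, a⟩ ⟨y, b⟩
  simp only [partialTranspose, of_apply, diagonal_apply, Prod.mk.injEq]
  by_cases h : x = y ∧ a = b
  · obtain ⟨rfl, rfl⟩ := h
    simp
  · rw [if_neg h, if_neg]
    tauto

lemma one_le_traceNorm_partialTranspose [Fintype R] [Fintype A] [DecidableEq R] [DecidableEq A]
    {ρ : Matrix (R × A) (R × A) ℂ} (hρ : IsDensity ρ) :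
    1 ≤ traceNorm (partialTranspose ρ) := by
  simpa [trace_partialTranspose, hρ.2] using
    (isHermitian_partialTranspose_s18 hρ.1.1).re_trace_le_traceNorm

lemma traceNorm_partialTranspose_sq_le [Fintype R] [Fintype A] [DecidableEq R] [DecidableEq A]
    {ρ : Matrix (R × A) (R × A) ℂ} (hρ : IsDensity ρ) :
    traceNorm (partialTranspose ρ) ^ 2 ≤ Fintype.card (R × A) := by
  have h := (isHermitian_partialTranspose_s18 hρ.1.1).traceNorm_sq_le
  rw [trace_partialTranspose_mul_self] at h
  exact h.trans (mul_le_of_le_one_right (Nat.cast_nonneg _) hρ.re_trace_mul_self_le_one)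

end Bipartite

lemma Real.mul_logb_sub_logb_div (b x : ℝ) {c : ℝ} (hc : c ≠ 0) :
    x * (Real.logb b x - Real.logb b (x / c)) = x * Real.logb b c := by
  rcases eq_or_ne x 0 with rfl | hx
  · simp
  · rw [Real.logb_div hx hc]
    ring

lemma sum_mul_mul_logb_mul_of_eq_zero_or_one {ι : Type*} [Fintype ι] {μ : ι → ℝ}
    (hμ01 : ∀ i, μ i = 0 ∨ μ i = 1) (hμ : ∑ i, μ i = 1) (r : ℝ) :
    ∑ i, r * μ i * Real.logb 2 (r * μ i) = r * Real.logb 2 r := by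
  calc ∑ i, r * μ i * Real.logb 2 (r * μ i) = ∑ i, μ i * (r * Real.logb 2 r) :=
        Finset.sum_congr rfl fun i _ => by rcases hμ01 i with h | h <;> simp [h]
    _ = r * Real.logb 2 r := by rw [← Finset.sum_mul, hμ, one_mul]

lemma Real.iInf_le_of_le_of_nonneg {ι : Sort*} {f : ι → ℝ} {b : ℝ} (i : ι) (hi : f i ≤ b)
    (hb : 0 ≤ b) : ⨅ i, f i ≤ b := by
  by_cases hf : BddBelow (Set.range f)
  · exact ciInf_le_of_le hf i hi
  · rwa [Real.iInf_of_not_bddBelow hf]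

section ErasureWitness

variable {R A : Type*} [Fintype R] [Fintype A] [DecidableEq R] [DecidableEq A]

def erasureRainsWitness (p : ℝ) (ρ : Matrix (R × A) (R × A) ℂ) :
    Matrix (R × (A ⊕ Unit)) (R × (A ⊕ Unit)) ℂ :=
  erasureBlocks ((((1 - p) / traceNorm (partialTranspose ρ) : ℝ) : ℂ) • ρ)
    ((p : ℂ) • partialTraceSnd ρ)

lemma erasureRainsWitness_mem_PPTprime {p : ℝ} (hp0 : 0 ≤ p) (hp1 : p ≤ 1)
    {ρ : Matrix (R × A) (R × A) ℂ} (hρ : IsDensity ρ) :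
    erasureRainsWitness p ρ ∈ PPTprime R (A ⊕ Unit) := by
  have hc := one_le_traceNorm_partialTranspose hρ
  have hs : 0 ≤ (1 - p) / traceNorm (partialTranspose ρ) := by
    apply div_nonneg <;> linarith
  have hσ := posSemidef_partialTraceSnd hρ.1
  have hρΓ := isHermitian_partialTranspose_s18 hρ.1.1
  constructor
  · exact posSemidef_fromBlocks_submatrix _ (hρ.1.smul (Complex.zero_le_real.mpr hs))
      (hσ.smul (Complex.zero_le_real.mpr hp0))
  · rw [erasureRainsWitness, partialTranspose_erasureBlocks, partialTranspose_smul, erasureBlocks,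
      traceNorm_fromBlocks_submatrix _ (hρΓ.smul (Complex.conj_ofReal _))
        (hσ.1.smul (Complex.conj_ofReal _)), hρΓ.traceNorm_smul, hσ.1.traceNorm_smul,
      hσ.traceNorm_eq_re_trace, trace_partialTraceSnd, hρ.2, abs_of_nonneg hs,
      abs_of_nonneg hp0, div_mul_cancel₀ _ (one_pos.trans_le hc).ne']
    simp

lemma relEntropy_chanExt_erasureChannel_erasureRainsWitness (p : ℝ)
    {ρ : Matrix (R × A) (R × A) ℂ} (hρ : IsDensity ρ) :
    relEntropy (chanExt (erasureChannel p) ρ) (erasureRainsWitness p ρ) =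
      (1 - p) * Real.logb 2 (traceNorm (partialTranspose ρ)) := by
  have hc : traceNorm (partialTranspose ρ) ≠ 0 :=
    (one_pos.trans_le (one_le_traceNorm_partialTranspose hρ)).ne'
  obtain ⟨V, m, hV⟩ : ∃ V m, partialTraceSnd ρ = spectralMatrix V m :=
    ⟨_, _, (posSemidef_partialTraceSnd hρ.1).1.eq_spectralMatrix⟩
  obtain ⟨U, l, hU⟩ : ∃ U l, ρ = spectralMatrix U l := ⟨_, _, hρ.1.1.eq_spectralMatrix⟩
  have hl : ∑ i, l i = 1 := by rw [← re_trace_spectralMatrix U, ← hU, hρ.2, Complex.one_re]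
  rw [chanExt_erasureChannel, erasureRainsWitness]
  generalize traceNorm (partialTranspose ρ) = c at hc ⊢
  rw [hV, hU, ← spectralMatrix_smul, ← spectralMatrix_smul, ← spectralMatrix_smul, erasureBlocks,
    erasureBlocks, relEntropy_fromBlocks_submatrix, relEntropy_spectralMatrix,
    relEntropy_spectralMatrix]
  simp only [Pi.smul_apply, smul_eq_mul, sub_self, mul_zero, Finset.sum_const_zero, add_zero]
  calc ∑ i, (1 - p) * l i * (Real.logb 2 ((1 - p) * l i) - Real.logb 2 ((1 - p) / c * l i))
      = ∑ i, (1 - p) * Real.logb 2 c * l i := by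
        refine Finset.sum_congr rfl fun i _ => ?_
        rw [div_mul_eq_mul_div, Real.mul_logb_sub_logb_div 2 _ hc]
        ring
    _ = (1 - p) * Real.logb 2 c := by rw [← Finset.mul_sum, hl, mul_one]

lemma exists_mem_PPTprime_relEntropy_chanExt_erasureChannel_le {p : ℝ} (hp0 : 0 ≤ p)
    (hp1 : p ≤ 1) {ρ : Matrix (A × A) (A × A) ℂ} (hρ : IsDensity ρ) :
    ∃ τ ∈ PPTprime A (A ⊕ Unit),
      relEntropy (chanExt (erasureChannel p) ρ) τ ≤ (1 - p) * Real.logb 2 (Fintype.card A) := by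
  refine ⟨_, erasureRainsWitness_mem_PPTprime hp0 hp1 hρ, ?_⟩
  have hc := one_le_traceNorm_partialTranspose hρ
  have hcd : traceNorm (partialTranspose ρ) ≤ Fintype.card A := by
    rw [← pow_le_pow_iff_left₀ (by linarith) (Nat.cast_nonneg _) two_ne_zero]
    simpa [sq] using traceNorm_partialTranspose_sq_le hρ
  rw [relEntropy_chanExt_erasureChannel_erasureRainsWitness p hρ]
  gcongr
  linarith

end ErasureWitness

section MaximallyEntangled

variable {A : Type*} [Fintype A] [DecidableEq A]

def erasureTauWeight (A : Type*) [Fintype A] [DecidableEq A] (p : ℝ) : A × (A ⊕ Unit) → ℝ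
  | (x, .inl y) => if x = y then (1 - p) / Fintype.card A else 0
  | (_, .inr _) => p / Fintype.card A

lemma erasureTau_eq_diagonal (p : ℝ) :
    erasureTau A p = diagonal fun i => (erasureTauWeight A p i : ℂ) := by
  ext ⟨x, a | u⟩ ⟨y, b | v⟩ <;> by_cases hxy : x = y <;>
    simp [erasureTau, erasureChannel, erasureTauWeight, hxy, single_apply, diagonal_apply,
      div_eq_inv_mul]
  by_cases hya : y = a <;> by_cases hab : a = b <;> simp_all

lemma sum_comp_erasureTauWeight (p : ℝ) (g : ℝ → ℝ) (hg : g 0 = 0) :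
    ∑ i, g (erasureTauWeight A p i) =
      Fintype.card A * (g ((1 - p) / Fintype.card A) + g (p / Fintype.card A)) := by
  simp [Fintype.sum_prod_type, Fintype.sum_sum_type, erasureTauWeight, apply_ite g, hg, mul_add]

lemma isHermitian_maxEntIn : (maxEntIn A).IsHermitian := by
  ext ⟨x, a⟩ ⟨y, b⟩
  by_cases h1 : y = b <;> by_cases h2 : x = a <;> simp [maxEntIn, h1, h2]

lemma partialTraceSnd_maxEntIn :
    partialTraceSnd (maxEntIn A) =
      ((Fintype.card A : ℂ)⁻¹) • (1 : Matrix (A × Unit) (A × Unit) ℂ) := by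
  ext ⟨x, u⟩ ⟨y, v⟩
  by_cases h : x = y
  · simp [partialTraceSnd, maxEntIn, one_apply, h]
  · simp [partialTraceSnd, maxEntIn, one_apply, h, ite_and, Ne.symm h]

lemma chanExt_erasureChannel_maxEntIn_apply_self (p : ℝ) (i : A × (A ⊕ Unit)) :
    chanExt (erasureChannel p) (maxEntIn A) i i = erasureTauWeight A p i := by
  rcases i with ⟨x, y | u⟩
  · by_cases h : x = y <;>
      simp [chanExt, erasureChannel, maxEntIn, erasureTauWeight, h, div_eq_mul_inv]
  · simp [chanExt, erasureChannel, maxEntIn, erasureTauWeight, trace, div_eq_mul_inv]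

variable [Nonempty A]

lemma maxEntIn_mul_self : maxEntIn A * maxEntIn A = maxEntIn A := by
  ext ⟨x, a⟩ ⟨y, b⟩
  by_cases hxa : x = a <;> by_cases hyb : y = b <;>
    simp [maxEntIn, mul_apply, Fintype.sum_prod_type, hxa, hyb, ite_and]

lemma trace_maxEntIn : (maxEntIn A).trace = 1 := by
  have hd : (Fintype.card A : ℂ) ≠ 0 := Nat.cast_ne_zero.mpr Fintype.card_ne_zero
  simp [trace, maxEntIn, Fintype.sum_prod_type, hd]

lemma erasureTau_mem_PPTprime {p : ℝ} (hp0 : 0 ≤ p) (hp1 : p ≤ 1) :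
    erasureTau A p ∈ PPTprime A (A ⊕ Unit) := by
  have hw : 0 ≤ erasureTauWeight A p := by
    rintro ⟨x, y | u⟩
    · dsimp only [erasureTauWeight]
      split_ifs
      exacts [div_nonneg (by linarith) (Nat.cast_nonneg _), le_rfl]
    · exact div_nonneg hp0 (Nat.cast_nonneg _)
  have hd : (Fintype.card A : ℝ) ≠ 0 := Nat.cast_ne_zero.mpr Fintype.card_ne_zero
  rw [erasureTau_eq_diagonal, ← spectralMatrix_one]
  refine ⟨posSemidef_spectralMatrix _ hw, ?_⟩
  rw [spectralMatrix_one, partialTranspose_diagonal, ← spectralMatrix_one, traceNorm_spectralMatrix]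
  refine le_of_eq ?_
  calc ∑ i, |erasureTauWeight A p i| = ∑ i, id (erasureTauWeight A p i) :=
        Finset.sum_congr rfl fun i _ => abs_of_nonneg (hw i)
    _ = 1 := by
        rw [sum_comp_erasureTauWeight p id rfl, id, id, ← add_div, sub_add_cancel,
          mul_one_div_cancel hd]

lemma relEntropy_chanExt_erasureChannel_maxEntIn_erasureTau (p : ℝ) :
    relEntropy (chanExt (erasureChannel p) (maxEntIn A)) (erasureTau A p) =
      (1 - p) * Real.logb 2 (Fintype.card A) := by
  set d : ℝ := (Fintype.card A : ℝ)
  have hd : d ≠ 0 := Nat.cast_ne_zero.mpr Fintype.card_ne_zero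
  have hΦ := isHermitian_maxEntIn (A := A)
  set μ := hΦ.eigenvalues
  have hμ01 : ∀ i, μ i = 0 ∨ μ i = 1 := hΦ.eigenvalues_eq_zero_or_one maxEntIn_mul_self
  have hμ : ∑ i, μ i = 1 := by
    rw [← hΦ.re_trace_eq_sum_eigenvalues, trace_maxEntIn, Complex.one_re]
  set e := Equiv.prodSumDistrib A A Unit
  have hout : chanExt (erasureChannel p) (maxEntIn A) =
      spectralMatrix (blockUnitary e hΦ.eigenvectorUnitary 1)
        (Sum.elim ((1 - p) • μ) (fun _ => p / d) ∘ e) := by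
    rw [← fromBlocks_spectralMatrix_submatrix, spectralMatrix_smul, ← hΦ.eq_spectralMatrix,
      spectralMatrix_one, chanExt_erasureChannel, partialTraceSnd_maxEntIn, erasureBlocks]
    congr
    ext i j
    by_cases h : i = j <;> simp [h, one_apply, div_eq_mul_inv, d]
  have hH_out : ∑ i, (Sum.elim ((1 - p) • μ) (fun _ => p / d) ∘ e) i *
      Real.logb 2 ((Sum.elim ((1 - p) • μ) (fun _ => p / d) ∘ e) i) =
      (1 - p) * Real.logb 2 (1 - p) + d * (p / d * Real.logb 2 (p / d)) := by
    refine (e.sum_comp fun x => Sum.elim ((1 - p) • μ) (fun _ => p / d) x *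
      Real.logb 2 (Sum.elim ((1 - p) • μ) (fun _ => p / d) x)).trans
      ((Fintype.sum_sum_type _).trans ?_)
    simp only [Sum.elim_inl, Sum.elim_inr, Pi.smul_apply, smul_eq_mul, Finset.sum_const,
      Finset.card_univ, Fintype.card_prod, Fintype.card_unit, mul_one, nsmul_eq_mul]
    rw [sum_mul_mul_logb_mul_of_eq_zero_or_one hμ01 hμ]
  rw [erasureTau_eq_diagonal, hout, relEntropy_spectralMatrix_diagonal, ← hout, hH_out]
  simp only [chanExt_erasureChannel_maxEntIn_apply_self, Complex.ofReal_re]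
  rw [sum_comp_erasureTauWeight p (fun x => x * Real.logb 2 x) (by simp)]
  have hcancel (x : ℝ) : d * (x / d * Real.logb 2 (x / d)) = x * Real.logb 2 (x / d) := by
    rw [← mul_assoc, mul_div_cancel₀ _ hd]
  rw [hcancel, mul_add, hcancel, hcancel, ← Real.mul_logb_sub_logb_div 2 (1 - p) hd]
  ring

end MaximallyEntangled

/-- Rains information upper bound for the qudit erasure channel. -/
theorem rains_erasure {A : Type*} [Fintype A] [DecidableEq A] [Nonempty A]
    (p : ℝ) (hp0 : 0 ≤ p) (hp1 : p ≤ 1) :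
    erasureTau A p ∈ PPTprime A (A ⊕ Unit) ∧
    relEntropy (chanExt (erasureChannel p) (maxEntIn A)) (erasureTau A p) =
      (1 - p) * Real.logb 2 (Fintype.card A) ∧
    RainsChan (erasureChannel (A := A) p) ≤ (1 - p) * Real.logb 2 (Fintype.card A) := by
  refine ⟨erasureTau_mem_PPTprime hp0 hp1,
    relEntropy_chanExt_erasureChannel_maxEntIn_erasureTau p, ?_⟩
  have hbound : 0 ≤ (1 - p) * Real.logb 2 (Fintype.card A) :=
    mul_nonneg (by linarith) (Real.logb_nonneg one_lt_two (Nat.one_le_cast.mpr Fintype.card_pos))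
  refine Real.iSup_le (fun ρ => ?_) hbound
  obtain ⟨τ, hτ, hle⟩ := exists_mem_PPTprime_relEntropy_chanExt_erasureChannel_le hp0 hp1 ρ.2
  exact Real.iInf_le_of_le_of_nonneg ⟨τ, hτ⟩ hle hbound
end
end
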